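/- (Lagrangian formulation of the inhomogeneous incompressible capillary Navier–Stokes system.) Let n ≥ 2, T > 0, κ ≥ 0, and let μ, k : ℝ → ℝ be C¹. Let ρ : [0,T] × ℝⁿ → ℝ be C¹ in t and C² in x, u : [0,T] × ℝⁿ → ℝⁿ be C¹ in t and C² in x, and P : [0,T] × ℝⁿ → ℝ be C¹ in x, satisfying on [0,T] × ℝⁿ: ∂ₜρ + u·∇ρ = 0; ρ(∂ₜu + (u·∇)u) − div(μ(ρ) D(u)) + ∇P = −κ div(k(ρ) ∇ρ ⊗ ∇ρ); div u = 0. Let X be a flow of u such that for each t, X(t,·) is a C² diffeomorphism of ℝⁿ with det DₓX(t,·) ≡ 1, let A(t,x) = (DₓX(t,x))⁻¹, and set ρ̄ = ρ(t,X(t,x)), ū = u(t,X(t,x)), P̄ = P(t,X(t,x)), ρ₀ = ρ(0,·). Then for all (t,x) ∈ [0,T] × ℝⁿ: (i) ρ̄(t,x) = ρ₀(x); (ii) ρ₀ ∂ₜū − div[ μ(ρ₀) A D_A(ū) ] + ᵗA ∇P̄ = −κ div[ k(ρ₀) A ( ᵗA ∇ρ₀ ) ⊗ ( ᵗA ∇ρ₀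 ) ]; (iii) div( A ū ) = 0, where all spatial differential operators act in the variable x. -/

import Mathlib

/-!
Along the flow the transport equation says that `ρ` is constant, which is (i), and the chain rule
in time turns `∂ₜū` into `(∂ₜu + (u·∇)u) ∘ X`. Everything else rests on two facts about
`A = (DX)⁻¹` when `det DX ≡ 1`: the chain rule `ᵗA ∇(f ∘ X) = (∇f) ∘ X`, and the Piola identity
`∑ⱼ ∂ⱼ Aⱼₐ = 0`. The latter follows from `∂ⱼA = -A (∂ⱼDX) A`, the symmetry of the second
derivatives of `X`, and Jacobi's formula `∂ⱼ det DX = tr (adj DX · ∂ⱼDX)`, whose left side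
vanishes. Together they give `div (A (w ∘ X)) = (div w) ∘ X`, so every Eulerian divergence in the
momentum equation becomes the corresponding Lagrangian one.
-/

open scoped BigOperators
open MeasureTheory

/-- Partial derivative `∂ᵢ f` of a scalar function at a point `x`. -/
noncomputable def pd {n : ℕ} (i : Fin n) (f : (Fin n → ℝ) → ℝ) (x : Fin n → ℝ) : ℝ :=
  fderiv ℝ f x (Pi.single i 1)

/-- Gradient of a scalar function. -/
noncomputable def grad {n : ℕ} (f : (Fin n → ℝ) → ℝ) (x : Fin n → ℝ) : Fin n → ℝ :=
  fun i => pd i f x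

/-- Laplacian of a scalar function. -/
noncomputable def lap {n : ℕ} (f : (Fin n → ℝ) → ℝ) (x : Fin n → ℝ) : ℝ :=
  ∑ i, pd i (pd i f) x

/-- Squared euclidean norm of the gradient, `|∇f|² = ∑ᵢ (∂ᵢf)²`. -/
noncomputable def gradNormSq {n : ℕ} (f : (Fin n → ℝ) → ℝ) (x : Fin n → ℝ) : ℝ :=
  ∑ i, (pd i f x) ^ 2

/-- Divergence of a matrix-valued field: `(matDiv M x)ᵢ = ∑ⱼ ∂ⱼ Mⱼᵢ`. -/
noncomputable def matDiv {n : ℕ} (M : (Fin n → ℝ) → Matrix (Fin n) (Fin n) ℝ)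
    (x : Fin n → ℝ) : Fin n → ℝ :=
  fun i => ∑ j, pd j (fun y => M y j i) x

/-- Divergence of a vector field: `vecDiv F x = ∑ᵢ ∂ᵢ Fᵢ`. -/
noncomputable def vecDiv {n : ℕ} (F : (Fin n → ℝ) → (Fin n → ℝ)) (x : Fin n → ℝ) : ℝ :=
  ∑ i, pd i (fun y => F y i) x

/-- Jacobian matrix of a vector field: `(jacM F x)ᵢⱼ = ∂ⱼ Fᵢ`. -/
noncomputable def jacM {n : ℕ} (F : (Fin n → ℝ) → (Fin n → ℝ)) (x : Fin n → ℝ) :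
    Matrix (Fin n) (Fin n) ℝ :=
  Matrix.of fun i j => pd j (fun y => F y i) x

/-- The matrix field `A = (DX)⁻¹` associated with a change of variables `X`. -/
noncomputable def Amat {n : ℕ} (X : (Fin n → ℝ) → (Fin n → ℝ)) (y : Fin n → ℝ) :
    Matrix (Fin n) (Fin n) ℝ :=
  (jacM X y)⁻¹

/-- Twisted deformation tensor `D_A(z) = Dz·A + ᵗA·ᵗ(Dz)`. -/
noncomputable def DAdef {n : ℕ} (A : (Fin n → ℝ) → Matrix (Fin n) (Fin n) ℝ)
    (z : (Fin n → ℝ) → (Fin n → ℝ)) (y : Fin n → ℝ) : Matrix (Fin n) (Fin n) ℝ :=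
  jacM z y * A y + Matrix.transpose (A y) * Matrix.transpose (jacM z y)

/-- The Lagrangian gradient vector `ᵗA ∇ρ₀`. -/
noncomputable def tAgrad {n : ℕ} (X : (Fin n → ℝ) → (Fin n → ℝ))
    (ρ₀ : (Fin n → ℝ) → ℝ) (y : Fin n → ℝ) : Fin n → ℝ :=
  Matrix.mulVec (Matrix.transpose (Amat X y)) (fun a => pd a ρ₀ y)

open Matrix

section PartialDerivatives

variable {n : ℕ} {x : Fin n → ℝ}

theorem pd_eq_of_hasFDerivAt {f : (Fin n → ℝ) → ℝ} {f' : (Fin n → ℝ) →L[ℝ] ℝ}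
    (h : HasFDerivAt f f' x) (i : Fin n) : pd i f x = f' (Pi.single i 1) := by
  rw [pd, h.fderiv]

theorem pd_const (i : Fin n) (c : ℝ) : pd i (fun _ => c) x = 0 := by
  simp [pd]

theorem pd_mul {f g : (Fin n → ℝ) → ℝ} (hf : DifferentiableAt ℝ f x)
    (hg : DifferentiableAt ℝ g x) (i : Fin n) :
    pd i (fun y => f y * g y) x = pd i f x * g x + f x * pd i g x := by
  rw [pd_eq_of_hasFDerivAt (hf.hasFDerivAt.fun_mul hg.hasFDerivAt)]
  simp only [pd, _root_.add_apply, _root_.smul_apply, smul_eq_mul]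
  ring

theorem pd_sum {ι : Type*} (s : Finset ι) {f : ι → (Fin n → ℝ) → ℝ}
    (hf : ∀ a ∈ s, DifferentiableAt ℝ (f a) x) (i : Fin n) :
    pd i (fun y => ∑ a ∈ s, f a y) x = ∑ a ∈ s, pd i (f a) x := by
  rw [pd_eq_of_hasFDerivAt (HasFDerivAt.fun_sum fun a ha => (hf a ha).hasFDerivAt)]
  simp [pd]

theorem fderiv_apply_eq_sum_pd {f : (Fin n → ℝ) → ℝ} (v : Fin n → ℝ) :
    fderiv ℝ f x v = ∑ a, v a * pd a f x := by
  conv_lhs => rw [pi_eq_sum_univ' v, map_sum]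
  simp [pd]

theorem pd_apply_of_hasFDerivAt {g : (Fin n → ℝ) → Fin n → ℝ}
    {g' : (Fin n → ℝ) →L[ℝ] Fin n → ℝ} (h : HasFDerivAt g g' x) (i a : Fin n) :
    pd i (fun y => g y a) x = g' (Pi.single i 1) a :=
  pd_eq_of_hasFDerivAt (hasFDerivAt_pi'.1 h a) i

theorem grad_comp {f : (Fin n → ℝ) → ℝ} {g : (Fin n → ℝ) → Fin n → ℝ}
    (hf : DifferentiableAt ℝ f (g x)) (hg : DifferentiableAt ℝ g x) :
    grad (fun y => f (g y)) x = (jacM g x)ᵀ *ᵥ grad f (g x) := by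
  ext j
  rw [grad, pd_eq_of_hasFDerivAt (f := fun y => f (g y)) (hf.hasFDerivAt.comp x hg.hasFDerivAt),
    ContinuousLinearMap.comp_apply, fderiv_apply_eq_sum_pd]
  simp [mulVec, dotProduct, jacM, grad, pd_apply_of_hasFDerivAt hg.hasFDerivAt]

theorem contDiff_pd {m : ℕ} {f : (Fin n → ℝ) → ℝ} (hf : ContDiff ℝ (m + 1) f) (i : Fin n) :
    ContDiff ℝ m (pd i f) :=
  (ContinuousLinearMap.apply ℝ ℝ (Pi.single i 1 : Fin n → ℝ)).contDiff.comp
    (hf.fderiv_right le_rfl)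

theorem pd_pd_comm {f : (Fin n → ℝ) → ℝ} (hf : ContDiff ℝ 2 f) (i j : Fin n) :
    pd i (pd j f) x = pd j (pd i f) x := by
  have hf' : HasFDerivAt (fderiv ℝ f) (fderiv ℝ (fderiv ℝ f) x) x :=
    ((hf.fderiv_right (by norm_num)).differentiable one_ne_zero x).hasFDerivAt
  have happly : ∀ v, HasFDerivAt (fun y => fderiv ℝ f y v)
      ((ContinuousLinearMap.apply ℝ ℝ v).comp (fderiv ℝ (fderiv ℝ f) x)) x :=
    fun v => (ContinuousLinearMap.apply ℝ ℝ v).hasFDerivAt.comp x hf'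
  show pd i (fun y => fderiv ℝ f y (Pi.single j 1)) x
    = pd j (fun y => fderiv ℝ f y (Pi.single i 1)) x
  rw [pd_eq_of_hasFDerivAt (happly _), pd_eq_of_hasFDerivAt (happly _)]
  exact second_derivative_symmetric
    (fun y => (hf.differentiable (by norm_num) y).hasFDerivAt) hf' _ _

end PartialDerivatives

section MatrixFields

variable {n : ℕ} {x : Fin n → ℝ}

noncomputable def pdM (j : Fin n) (M : (Fin n → ℝ) → Matrix (Fin n) (Fin n) ℝ)
    (x : Fin n → ℝ) : Matrix (Fin n) (Fin n) ℝ :=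
  Matrix.of fun p q => pd j (fun y => M y p q) x

theorem pdM_const (j : Fin n) (C : Matrix (Fin n) (Fin n) ℝ) : pdM j (fun _ => C) x = 0 := by
  ext p q
  exact pd_const j _

theorem pdM_mul {M N : (Fin n → ℝ) → Matrix (Fin n) (Fin n) ℝ}
    (hM : ∀ p q, DifferentiableAt ℝ (fun y => M y p q) x)
    (hN : ∀ p q, DifferentiableAt ℝ (fun y => N y p q) x) (j : Fin n) :
    pdM j (fun y => M y * N y) x = pdM j M x * N x + M x * pdM j N x := by
  ext p q
  simp only [pdM, mul_apply, of_apply, Matrix.add_apply, ← Finset.sum_add_distrib]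
  rw [pd_sum _ fun r _ => (hM p r).fun_mul (hN r q)]
  exact Finset.sum_congr rfl fun r _ => pd_mul (hM p r) (hN r q) j

end MatrixFields

section Determinant

theorem Matrix.det_updateRow_eq_sum_adjugate {ι R : Type*} [Fintype ι] [DecidableEq ι]
    [CommRing R] (M : Matrix ι ι R) (p : ι) (v : ι → R) :
    (M.updateRow p v).det = ∑ q, M.adjugate q p * v q := by
  rw [← cramer_transpose_apply, cramer_eq_adjugate_mulVec, ← adjugate_transpose]
  rfl

noncomputable def Matrix.detRowContinuousMultilinear (n : ℕ) :
    ContinuousMultilinearMap ℝ (fun _ : Fin n => Fin n → ℝ) ℝ :=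
  { (detRowAlternating : (Fin n → ℝ) [⋀^Fin n]→ₗ[ℝ] ℝ).toMultilinearMap with
    cont := continuous_id.matrix_det }

variable {n : ℕ}

theorem hasFDerivAt_det {E : Type*} [NormedAddCommGroup E] [NormedSpace ℝ E]
    {F : E → Matrix (Fin n) (Fin n) ℝ} {F' : Fin n → E →L[ℝ] Fin n → ℝ} {x : E}
    (hF : ∀ p, HasFDerivAt (fun y => F y p) (F' p) x) :
    HasFDerivAt (fun y => (F y).det)
      (∑ p, ((detRowContinuousMultilinear n).toContinuousLinearMap (F x) p).comp (F' p)) x :=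
  HasFDerivAt.multilinear_comp (detRowContinuousMultilinear n) hF

theorem differentiableAt_det {E : Type*} [NormedAddCommGroup E] [NormedSpace ℝ E]
    {F : E → Matrix (Fin n) (Fin n) ℝ} {x : E}
    (hF : ∀ p, DifferentiableAt ℝ (fun y => F y p) x) :
    DifferentiableAt ℝ (fun y => (F y).det) x :=
  (hasFDerivAt_det fun p => (hF p).hasFDerivAt).differentiableAt

theorem pd_det {F : (Fin n → ℝ) → Matrix (Fin n) (Fin n) ℝ} {x : Fin n → ℝ}
    (hF : ∀ p, DifferentiableAt ℝ (fun y => F y p) x) (j : Fin n) :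
    pd j (fun y => (F y).det) x = ((F x).adjugate * pdM j F x).trace := by
  rw [pd_eq_of_hasFDerivAt (hasFDerivAt_det (F := F) fun p => (hF p).hasFDerivAt),
    _root_.sum_apply]
  simp only [trace, diag_apply, mul_apply]
  rw [Finset.sum_comm]
  refine Finset.sum_congr rfl fun p _ => ?_
  simp only [pdM, of_apply, pd_apply_of_hasFDerivAt (hF p).hasFDerivAt]
  exact det_updateRow_eq_sum_adjugate (F x) p _

end Determinant

section InverseJacobian

variable {n : ℕ} {Y : (Fin n → ℝ) → Fin n → ℝ} {x : Fin n → ℝ}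

theorem Amat_eq_adjugate (hdet : (jacM Y x).det = 1) : Amat Y x = (jacM Y x).adjugate := by
  rw [Amat, inv_def, hdet, Ring.inverse_one, one_smul]

theorem jacM_mul_Amat (hdet : (jacM Y x).det = 1) : jacM Y x * Amat Y x = 1 :=
  mul_nonsing_inv _ (hdet ▸ isUnit_one)

theorem Amat_mul_jacM (hdet : (jacM Y x).det = 1) : Amat Y x * jacM Y x = 1 :=
  nonsing_inv_mul _ (hdet ▸ isUnit_one)

theorem differentiable_jacM_apply (hY : ContDiff ℝ 2 Y) (p q : Fin n) :
    Differentiable ℝ (fun y => jacM Y y p q) :=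
  (contDiff_pd (m := 1) (contDiff_pi.1 hY p) q).differentiable one_ne_zero

theorem differentiable_Amat_apply (hY : ContDiff ℝ 2 Y) (hdet : ∀ y, (jacM Y y).det = 1)
    (a b : Fin n) : Differentiable ℝ (fun y => Amat Y y a b) := by
  intro y
  simp only [Amat_eq_adjugate (hdet _), adjugate_apply]
  refine differentiableAt_det fun p => ?_
  by_cases hp : p = b
  · subst hp
    simp only [updateRow_self]
    exact differentiableAt_const _
  · simp only [updateRow_ne hp]
    exact differentiableAt_pi.2 fun q => differentiable_jacM_apply hY p q y

theorem pdM_Amat (hY : ContDiff ℝ 2 Y) (hdet : ∀ y, (jacM Y y).det = 1) (j : Fin n) :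
    pdM j (Amat Y) x = -(Amat Y x * pdM j (jacM Y) x * Amat Y x) := by
  have hprod : pdM j (jacM Y) x * Amat Y x + jacM Y x * pdM j (Amat Y) x = 0 := by
    rw [← pdM_mul (fun p q => differentiable_jacM_apply hY p q x)
      (fun p q => differentiable_Amat_apply hY hdet p q x)]
    simp only [jacM_mul_Amat (hdet _)]
    exact pdM_const j 1
  calc pdM j (Amat Y) x = Amat Y x * (jacM Y x * pdM j (Amat Y) x) := by
        rw [← Matrix.mul_assoc, Amat_mul_jacM (hdet x), Matrix.one_mul]
    _ = _ := by rw [eq_neg_of_add_eq_zero_right hprod, Matrix.mul_neg, Matrix.mul_assoc]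

theorem sum_pd_Amat_eq_zero (hY : ContDiff ℝ 2 Y) (hdet : ∀ y, (jacM Y y).det = 1)
    (a : Fin n) : ∑ j, pd j (fun y => Amat Y y j a) x = 0 := by
  have hsymm : ∀ j p q, pdM j (jacM Y) x p q = pdM q (jacM Y) x p j :=
    fun j p q => pd_pd_comm (contDiff_pi.1 hY p) j q
  have hjacobi : ∀ q, (Amat Y x * pdM q (jacM Y) x).trace = 0 := by
    intro q
    rw [Amat_eq_adjugate (hdet x),
      ← pd_det (fun p => differentiableAt_pi.2 fun r => differentiable_jacM_apply hY p r x)]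
    simp only [hdet]
    exact pd_const q 1
  calc ∑ j, pd j (fun y => Amat Y y j a) x = ∑ j, pdM j (Amat Y) x j a := rfl
    _ = -∑ q, (Amat Y x * pdM q (jacM Y) x).trace * Amat Y x q a := by
        simp only [pdM_Amat hY hdet, Matrix.neg_apply, mul_apply, trace, diag_apply,
          Finset.sum_mul, Finset.sum_neg_distrib]
        congr 1
        rw [Finset.sum_comm]
        refine Finset.sum_congr rfl fun q _ => Finset.sum_congr rfl fun j _ =>
          Finset.sum_congr rfl fun p _ => ?_
        rw [hsymm]
    _ = 0 := by simp [hjacobi]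

end InverseJacobian

section LagrangianCoordinates

variable {n : ℕ} {Y : (Fin n → ℝ) → Fin n → ℝ} {x : Fin n → ℝ}

theorem transpose_Amat_mulVec_grad_comp {f : (Fin n → ℝ) → ℝ}
    (hf : DifferentiableAt ℝ f (Y x)) (hY : DifferentiableAt ℝ Y x)
    (hdet : (jacM Y x).det = 1) :
    (Amat Y x)ᵀ *ᵥ grad (fun y => f (Y y)) x = grad f (Y x) := by
  rw [grad_comp hf hY, mulVec_mulVec, ← transpose_mul, jacM_mul_Amat hdet, transpose_one,
    one_mulVec]

theorem sum_Amat_mul_pd_comp {f : (Fin n → ℝ) → ℝ}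
    (hf : DifferentiableAt ℝ f (Y x)) (hY : DifferentiableAt ℝ Y x)
    (hdet : (jacM Y x).det = 1) (i : Fin n) :
    ∑ j, Amat Y x j i * pd j (fun y => f (Y y)) x = pd i f (Y x) :=
  congrFun (transpose_Amat_mulVec_grad_comp hf hY hdet) i

theorem tAgrad_comp {r : (Fin n → ℝ) → ℝ}
    (hr : DifferentiableAt ℝ r (Y x)) (hY : DifferentiableAt ℝ Y x)
    (hdet : (jacM Y x).det = 1) :
    tAgrad Y (fun y => r (Y y)) x = grad r (Y x) :=
  transpose_Amat_mulVec_grad_comp hr hY hdet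

theorem jacM_comp {g : (Fin n → ℝ) → Fin n → ℝ}
    (hg : DifferentiableAt ℝ g (Y x)) (hY : DifferentiableAt ℝ Y x) :
    jacM (fun y => g (Y y)) x = jacM g (Y x) * jacM Y x := by
  ext a b
  have h := congrFun (grad_comp (differentiableAt_pi.1 hg a) hY) b
  simp only [grad, mulVec, dotProduct, transpose_apply] at h
  simp only [jacM, of_apply, mul_apply, h, mul_comm]

theorem DAdef_Amat_comp {g : (Fin n → ℝ) → Fin n → ℝ}
    (hg : DifferentiableAt ℝ g (Y x)) (hY : DifferentiableAt ℝ Y x)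
    (hdet : (jacM Y x).det = 1) :
    DAdef (Amat Y) (fun y => g (Y y)) x = jacM g (Y x) + (jacM g (Y x))ᵀ := by
  have h : jacM (fun y => g (Y y)) x * Amat Y x = jacM g (Y x) := by
    rw [jacM_comp hg hY, Matrix.mul_assoc, jacM_mul_Amat hdet, Matrix.mul_one]
  rw [DAdef, ← transpose_mul, h]

theorem vecDiv_Amat_mulVec_comp (hY : ContDiff ℝ 2 Y) (hdet : ∀ y, (jacM Y y).det = 1)
    {w : (Fin n → ℝ) → Fin n → ℝ} (hw : DifferentiableAt ℝ w (Y x)) :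
    vecDiv (fun y => Amat Y y *ᵥ w (Y y)) x = vecDiv w (Y x) := by
  have hYx : DifferentiableAt ℝ Y x := hY.differentiable (by norm_num) x
  have hwY : ∀ a, DifferentiableAt ℝ (fun y => w (Y y) a) x :=
    fun a => (differentiableAt_pi.1 hw a).comp x hYx
  have hA : ∀ j a, DifferentiableAt ℝ (fun y => Amat Y y j a) x :=
    fun j a => differentiable_Amat_apply hY hdet j a x
  calc vecDiv (fun y => Amat Y y *ᵥ w (Y y)) x
      = ∑ j, ∑ a, (pd j (fun y => Amat Y y j a) x * w (Y x) a
          + Amat Y x j a * pd j (fun y => w (Y y) a) x) := by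
        refine Finset.sum_congr rfl fun j _ => ?_
        rw [← Finset.sum_congr rfl fun a _ => pd_mul (hA j a) (hwY a) j,
          ← pd_sum _ fun a _ => (hA j a).fun_mul (hwY a)]
        rfl
    _ = ∑ a, ((∑ j, pd j (fun y => Amat Y y j a) x) * w (Y x) a
          + ((Amat Y x)ᵀ *ᵥ grad (fun y => w (Y y) a) x) a) := by
        rw [Finset.sum_comm]
        simp only [Finset.sum_add_distrib, Finset.sum_mul]
        rfl
    _ = vecDiv w (Y x) := by
        simp only [sum_pd_Amat_eq_zero hY hdet, zero_mul, zero_add,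
          transpose_Amat_mulVec_grad_comp (differentiableAt_pi.1 hw _) hYx (hdet x)]
        rfl

theorem matDiv_Amat_mul_comp (hY : ContDiff ℝ 2 Y) (hdet : ∀ y, (jacM Y y).det = 1)
    {M : (Fin n → ℝ) → Matrix (Fin n) (Fin n) ℝ}
    (hM : ∀ a b, DifferentiableAt ℝ (fun z => M z a b) (Y x)) :
    matDiv (fun y => Amat Y y * M (Y y)) x = matDiv M (Y x) :=
  funext fun i => vecDiv_Amat_mulVec_comp hY hdet (w := fun z a => M z a i)
    (differentiableAt_pi.2 fun a => hM a i)

end LagrangianCoordinates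

section LagrangianTerms

variable {n : ℕ} {Y : (Fin n → ℝ) → Fin n → ℝ}

theorem sum_pd_smul_Amat_mul_DAdef_comp (hY : ContDiff ℝ 2 Y)
    (hdet : ∀ y, (jacM Y y).det = 1) {c : ℝ → ℝ} (hc : Differentiable ℝ c)
    {r : (Fin n → ℝ) → ℝ} (hr : Differentiable ℝ r) {v : (Fin n → ℝ) → Fin n → ℝ}
    (hv : ContDiff ℝ 2 v) (x : Fin n → ℝ) (i : Fin n) :
    ∑ j, pd j (fun y => c (r (Y y)) *
        (Amat Y y * DAdef (fun z => Amat Y z) (fun z => v (Y z)) y) j i) x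
      = ∑ j, pd j (fun z => c (r z) * (pd j (fun w => v w i) z + pd i (fun w => v w j) z))
          (Y x) := by
  have hstress : ∀ y, c (r (Y y)) • (Amat Y y * DAdef (Amat Y) (fun z => v (Y z)) y)
      = Amat Y y * (c (r (Y y)) • ((jacM v (Y y))ᵀ + jacM v (Y y))) := fun y => by
    rw [DAdef_Amat_comp (hv.differentiable (by norm_num) _) (hY.differentiable (by norm_num) y)
      (hdet y), add_comm, Matrix.mul_smul]
  have hM : ∀ a b, DifferentiableAt ℝ
      (fun z => (c (r z) • ((jacM v z)ᵀ + jacM v z)) a b) (Y x) := fun a b => by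
    simp only [Matrix.smul_apply, Matrix.add_apply, transpose_apply, smul_eq_mul]
    exact ((hc.comp hr) _).mul
      ((differentiable_jacM_apply hv b a _).add (differentiable_jacM_apply hv a b _))
  have h := congrFun (matDiv_Amat_mul_comp hY hdet hM) i
  simp only [← hstress] at h
  exact h

theorem sum_pd_smul_Amat_mul_vecMulVec_tAgrad_comp (hY : ContDiff ℝ 2 Y)
    (hdet : ∀ y, (jacM Y y).det = 1) {c : ℝ → ℝ} (hc : Differentiable ℝ c)
    {r : (Fin n → ℝ) → ℝ} (hr : ContDiff ℝ 2 r) (x : Fin n → ℝ) (i : Fin n) :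
    ∑ j, pd j (fun y => c (r (Y y)) * (Amat Y y *
        vecMulVec (tAgrad Y (fun z => r (Y z)) y) (tAgrad Y (fun z => r (Y z)) y)) j i) x
      = ∑ j, pd j (fun z => c (r z) * pd j r z * pd i r z) (Y x) := by
  have htensor : ∀ y, c (r (Y y)) • (Amat Y y *
        vecMulVec (tAgrad Y (fun z => r (Y z)) y) (tAgrad Y (fun z => r (Y z)) y))
      = Amat Y y * (c (r (Y y)) • vecMulVec (grad r (Y y)) (grad r (Y y))) := fun y => by
    rw [tAgrad_comp (hr.differentiable (by norm_num) _) (hY.differentiable (by norm_num) y)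
      (hdet y), Matrix.mul_smul]
  have hM : ∀ a b, DifferentiableAt ℝ
      (fun z => (c (r z) • vecMulVec (grad r z) (grad r z)) a b) (Y x) := fun a b => by
    simp only [Matrix.smul_apply, vecMulVec_apply, grad, smul_eq_mul]
    exact ((hc.comp (hr.differentiable (by norm_num))) _).mul
      (((contDiff_pd (m := 1) hr a).differentiable one_ne_zero _).mul
        ((contDiff_pd (m := 1) hr b).differentiable one_ne_zero _))
  have h := congrFun (matDiv_Amat_mul_comp hY hdet hM) i
  simp only [← htensor] at h
  simp only [mul_assoc]
  exact h

end LagrangianTerms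

section Flow

variable {n : ℕ}

theorem hasDerivWithinAt_comp_curve {f : ℝ → (Fin n → ℝ) → ℝ} {γ : ℝ → Fin n → ℝ}
    {γ' : Fin n → ℝ} {s : Set ℝ} {t : ℝ}
    (hf : DifferentiableAt ℝ (fun p : ℝ × (Fin n → ℝ) => f p.1 p.2) (t, γ t))
    (hs : UniqueDiffWithinAt ℝ s t) (hγ : HasDerivWithinAt γ γ' s t) :
    HasDerivWithinAt (fun τ => f τ (γ τ))
      (derivWithin (fun τ => f τ (γ t)) s t + ∑ j, γ' j * pd j (f t) (γ t)) s t := by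
  have htime : HasDerivWithinAt (fun τ => f τ (γ t))
      (fderiv ℝ (fun p : ℝ × (Fin n → ℝ) => f p.1 p.2) (t, γ t) (1, 0)) s t := by
    have h := hf.hasFDerivAt.comp_hasDerivWithinAt t
      ((hasDerivWithinAt_id t s).prodMk (hasDerivWithinAt_const t s (γ t)))
    exact h
  have hspace : HasFDerivAt (f t) ((fderiv ℝ (fun p : ℝ × (Fin n → ℝ) => f p.1 p.2) (t, γ t)).comp
      (ContinuousLinearMap.inr ℝ ℝ _)) (γ t) :=
    hf.hasFDerivAt.comp (γ t) (hasFDerivAt_prodMk_right t (γ t))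
  refine (hf.hasFDerivAt.comp_hasDerivWithinAt t
    ((hasDerivWithinAt_id t s).prodMk hγ)).congr_deriv ?_
  rw [htime.derivWithin hs, ← fderiv_apply_eq_sum_pd, hspace.fderiv,
    ContinuousLinearMap.comp_apply, ContinuousLinearMap.inr_apply, ← map_add, Prod.mk_add_mk,
    add_zero, zero_add]

theorem comp_flow_eq_of_transport {T : ℝ} (hT : 0 < T) {f : ℝ → (Fin n → ℝ) → ℝ}
    {v X : ℝ → (Fin n → ℝ) → Fin n → ℝ} {y : Fin n → ℝ}
    (hf : Differentiable ℝ (fun p : ℝ × (Fin n → ℝ) => f p.1 p.2))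
    (htransport : ∀ s ∈ Set.Icc 0 T, ∀ z,
      derivWithin (fun τ => f τ z) (Set.Icc 0 T) s + ∑ i, v s z i * pd i (f s) z = 0)
    (hX : ∀ s ∈ Set.Icc 0 T, HasDerivWithinAt (fun τ => X τ y) (v s (X s y)) (Set.Icc 0 T) s) :
    ∀ s ∈ Set.Icc 0 T, f s (X s y) = f 0 (X 0 y) := by
  have hderiv : ∀ s ∈ Set.Icc 0 T, HasDerivWithinAt (fun τ => f τ (X τ y)) 0 (Set.Icc 0 T) s :=
    fun s hs => by
      simpa only [htransport s hs] using
        hasDerivWithinAt_comp_curve (hf _) (uniqueDiffOn_Icc hT s hs) (hX s hs)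
  exact constant_of_derivWithin_zero (fun s hs => (hderiv s hs).differentiableWithinAt)
    fun s hs => (hderiv s (Set.Ico_subset_Icc_self hs)).derivWithin
      (uniqueDiffOn_Icc hT s (Set.Ico_subset_Icc_self hs))

end Flow

theorem lagrangian_formulation_capillary_NS_general {n : ℕ}
    (T κ : ℝ) (hT : 0 < T)
    (μ k : ℝ → ℝ) (hμ : ContDiff ℝ 1 μ) (hk : ContDiff ℝ 1 k)
    (ρ P : ℝ → (Fin n → ℝ) → ℝ)
    (u X : ℝ → (Fin n → ℝ) → (Fin n → ℝ))
    (hρ_joint : ContDiff ℝ 1 (fun p : ℝ × (Fin n → ℝ) => ρ p.1 p.2))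
    (hρx : ∀ t, ContDiff ℝ 2 (ρ t))
    (hu_joint : ContDiff ℝ 1 (fun p : ℝ × (Fin n → ℝ) => u p.1 p.2))
    (hux : ∀ t, ContDiff ℝ 2 (u t))
    (hP : ∀ t, ContDiff ℝ 1 (P t))
    (htransport : ∀ t ∈ Set.Icc (0 : ℝ) T, ∀ x : Fin n → ℝ,
      derivWithin (fun s => ρ s x) (Set.Icc 0 T) t
        + ∑ i, u t x i * pd i (ρ t) x = 0)
    (hmomentum : ∀ t ∈ Set.Icc (0 : ℝ) T, ∀ x : Fin n → ℝ, ∀ i : Fin n,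
      ρ t x * (derivWithin (fun s => u s x i) (Set.Icc 0 T) t
            + ∑ j, u t x j * pd j (fun y => u t y i) x)
        - ∑ j, pd j (fun y => μ (ρ t y) *
            (pd j (fun z => u t z i) y + pd i (fun z => u t z j) y)) x
        + pd i (P t) x
      = - κ * ∑ j, pd j (fun y => k (ρ t y) * pd j (ρ t) y * pd i (ρ t) y) x)
    (hdivfree : ∀ t ∈ Set.Icc (0 : ℝ) T, ∀ x : Fin n → ℝ,
      ∑ i, pd i (fun y => u t y i) x = 0)
    (hX0 : ∀ x, X 0 x = x)
    (hXflow : ∀ t ∈ Set.Icc (0 : ℝ) T, ∀ x,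
      HasDerivWithinAt (fun s => X s x) (u t (X t x)) (Set.Icc 0 T) t)
    (hXreg : ∀ t ∈ Set.Icc (0 : ℝ) T, ContDiff ℝ 2 (X t))
    (hXdet : ∀ t ∈ Set.Icc (0 : ℝ) T, ∀ x, (jacM (X t) x).det = 1)
    (t : ℝ) (ht : t ∈ Set.Icc (0 : ℝ) T) (x : Fin n → ℝ) :
    (ρ t (X t x) = ρ 0 x)
    ∧ (∀ i : Fin n,
        ρ 0 x * derivWithin (fun s => u s (X s x) i) (Set.Icc 0 T) t
          - (∑ j, pd j (fun y => μ (ρ 0 y) *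
              (Amat (X t) y *
                DAdef (fun z => Amat (X t) z) (fun z => u t (X t z)) y) j i) x)
          + (∑ j, Amat (X t) x j i * pd j (fun y => P t (X t y)) x)
        = - κ * ∑ j, pd j (fun y => k (ρ 0 y) *
            (Amat (X t) y *
              Matrix.vecMulVec (tAgrad (X t) (ρ 0) y) (tAgrad (X t) (ρ 0) y)) j i) x)
    ∧ (∑ i, pd i (fun y => ∑ j, Amat (X t) y i j * u t (X t y) j) x = 0) := by
  have hY := hXreg t ht
  have hdet := hXdet t ht
  have hρ_flow : ∀ s ∈ Set.Icc (0 : ℝ) T, ∀ y, ρ s (X s y) = ρ 0 y := fun s hs y => by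
    simpa only [hX0] using comp_flow_eq_of_transport hT (hρ_joint.differentiable one_ne_zero)
      htransport (fun τ hτ => hXflow τ hτ y) s hs
  have hρ0 : ρ 0 = fun y => ρ t (X t y) := funext fun y => (hρ_flow t ht y).symm
  refine ⟨hρ_flow t ht x, fun i => ?_, ?_⟩
  · have hmaterial := (hasDerivWithinAt_comp_curve (f := fun s y => u s y i)
      ((contDiff_pi.1 hu_joint i).differentiable one_ne_zero _) (uniqueDiffOn_Icc hT t ht)
      (hXflow t ht x)).derivWithin (uniqueDiffOn_Icc hT t ht)
    rw [hρ0, hmaterial,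
      sum_pd_smul_Amat_mul_DAdef_comp hY hdet (hμ.differentiable one_ne_zero)
        ((hρx t).differentiable (by norm_num)) (hux t),
      sum_Amat_mul_pd_comp ((hP t).differentiable one_ne_zero _)
        (hY.differentiable (by norm_num) x) (hdet x),
      sum_pd_smul_Amat_mul_vecMulVec_tAgrad_comp hY hdet (hk.differentiable one_ne_zero) (hρx t)]
    exact hmomentum t ht (X t x) i
  · exact (vecDiv_Amat_mulVec_comp hY hdet ((hux t).differentiable (by norm_num) _)).trans
      (hdivfree t ht (X t x))

/-- Lagrangian formulation of the inhomogeneous incompressible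
capillary Navier–Stokes system: if `(ρ,u,P)` solves
`∂ₜρ + u·∇ρ = 0`,
`ρ(∂ₜu + (u·∇)u) − div(μ(ρ)D(u)) + ∇P = −κ div(k(ρ)∇ρ⊗∇ρ)`, `div u = 0`
on `[0,T]×ℝⁿ` and `X` is a flow of `u` consisting of measure-preserving C²
diffeomorphisms (`det DₓX ≡ 1`), then with `A = (DₓX)⁻¹`, `ū = u∘X`, `P̄ = P∘X`,
`ρ₀ = ρ(0,·)`:
(i) `ρ(t,X(t,x)) = ρ₀(x)`;
(ii) `ρ₀ ∂ₜū − div[μ(ρ₀) A D_A(ū)] + ᵗA∇P̄ = −κ div[k(ρ₀) A (ᵗA∇ρ₀)⊗(ᵗA∇ρ₀)]`;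
(iii) `div(A ū) = 0`. -/
theorem lagrangian_formulation_capillary_NS {n : ℕ} (hn : 2 ≤ n)
    (T κ : ℝ) (hT : 0 < T) (hκ : 0 ≤ κ)
    (μ k : ℝ → ℝ) (hμ : ContDiff ℝ 1 μ) (hk : ContDiff ℝ 1 k)
    (ρ P : ℝ → (Fin n → ℝ) → ℝ)
    (u X : ℝ → (Fin n → ℝ) → (Fin n → ℝ))
    (hρ_joint : ContDiff ℝ 1 (fun p : ℝ × (Fin n → ℝ) => ρ p.1 p.2))
    (hρx : ∀ t, ContDiff ℝ 2 (ρ t))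
    (hu_joint : ContDiff ℝ 1 (fun p : ℝ × (Fin n → ℝ) => u p.1 p.2))
    (hux : ∀ t, ContDiff ℝ 2 (u t))
    (hP : ∀ t, ContDiff ℝ 1 (P t))
    (htransport : ∀ t ∈ Set.Icc (0 : ℝ) T, ∀ x : Fin n → ℝ,
      derivWithin (fun s => ρ s x) (Set.Icc 0 T) t
        + ∑ i, u t x i * pd i (ρ t) x = 0)
    (hmomentum : ∀ t ∈ Set.Icc (0 : ℝ) T, ∀ x : Fin n → ℝ, ∀ i : Fin n,
      ρ t x * (derivWithin (fun s => u s x i) (Set.Icc 0 T) t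
            + ∑ j, u t x j * pd j (fun y => u t y i) x)
        - ∑ j, pd j (fun y => μ (ρ t y) *
            (pd j (fun z => u t z i) y + pd i (fun z => u t z j) y)) x
        + pd i (P t) x
      = - κ * ∑ j, pd j (fun y => k (ρ t y) * pd j (ρ t) y * pd i (ρ t) y) x)
    (hdivfree : ∀ t ∈ Set.Icc (0 : ℝ) T, ∀ x : Fin n → ℝ,
      ∑ i, pd i (fun y => u t y i) x = 0)
    (hX0 : ∀ x, X 0 x = x)
    (hXflow : ∀ t ∈ Set.Icc (0 : ℝ) T, ∀ x,
      HasDerivWithinAt (fun s => X s x) (u t (X t x)) (Set.Icc 0 T) t)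
    (hXreg : ∀ t ∈ Set.Icc (0 : ℝ) T, ContDiff ℝ 2 (X t))
    (hXbij : ∀ t ∈ Set.Icc (0 : ℝ) T, Function.Bijective (X t))
    (hXdet : ∀ t ∈ Set.Icc (0 : ℝ) T, ∀ x, (jacM (X t) x).det = 1)
    (t : ℝ) (ht : t ∈ Set.Icc (0 : ℝ) T) (x : Fin n → ℝ) :
    (ρ t (X t x) = ρ 0 x)
    ∧ (∀ i : Fin n,
        ρ 0 x * derivWithin (fun s => u s (X s x) i) (Set.Icc 0 T) t
          - (∑ j, pd j (fun y => μ (ρ 0 y) *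
              (Amat (X t) y *
                DAdef (fun z => Amat (X t) z) (fun z => u t (X t z)) y) j i) x)
          + (∑ j, Amat (X t) x j i * pd j (fun y => P t (X t y)) x)
        = - κ * ∑ j, pd j (fun y => k (ρ 0 y) *
            (Amat (X t) y *
              Matrix.vecMulVec (tAgrad (X t) (ρ 0) y) (tAgrad (X t) (ρ 0) y)) j i) x)
    ∧ (∑ i, pd i (fun y => ∑ j, Amat (X t) y i j * u t (X t y) j) x = 0) :=
  lagrangian_formulation_capillary_NS_general T κ hT μ k hμ hk ρ P u X hρ_joint hρx hu_joint hux hP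
    htransport hmomentum hdivfree hX0 hXflow hXreg hXdet t ht x
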